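/- Let α₁,α₂,α₃,ε ∈ ℝ and let (x₁,x₂,x₃,x̃₁,x̃₂,x̃₃) ∈ ℝ⁶ satisfy the dET equations x̃_i − x_i = εα_i(x̃_j x_k + x_j x̃_k) for all cyclic permutations (i,j,k) of (1,2,3). Assume 1 − ε²α_jα_k x_i² ≠ 0 for each i. Then for each cyclic permutation (i,j,k) of (1,2,3) one has the discrete Wronskian relation x̃_j x_k − x_j x̃_k = ε H_i(ε) (x̃_i + x_i), where H_i(ε) = (α_j x_k² − α_k x_j²)/(1 − ε²α_jα_k x_i²). -/
import Mathlib

/-- Discrete Wronskian relations for the Hirota–Kimura discretization dET of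
the Euler top: `x̃ⱼxₖ - xⱼx̃ₖ = ε Hᵢ(ε) (x̃ᵢ + xᵢ)` for each cyclic permutation
`(i,j,k)` of `(1,2,3)`, where `Hᵢ(ε) = (αⱼxₖ² - αₖxⱼ²)/(1 - ε²αⱼαₖxᵢ²)`. -/
theorem dET_discrete_Wronskian (a1 a2 a3 ε x1 x2 x3 xt1 xt2 xt3 H1 H2 H3 : ℝ)
    (h1 : xt1 - x1 = ε * a1 * (xt2 * x3 + x2 * xt3))
    (h2 : xt2 - x2 = ε * a2 * (xt3 * x1 + x3 * xt1))
    (h3 : xt3 - x3 = ε * a3 * (xt1 * x2 + x1 * xt2))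
    (hd1 : 1 - ε ^ 2 * a2 * a3 * x1 ^ 2 ≠ 0)
    (hd2 : 1 - ε ^ 2 * a3 * a1 * x2 ^ 2 ≠ 0)
    (hd3 : 1 - ε ^ 2 * a1 * a2 * x3 ^ 2 ≠ 0)
    (hH1 : H1 = (a2 * x3 ^ 2 - a3 * x2 ^ 2) / (1 - ε ^ 2 * a2 * a3 * x1 ^ 2))
    (hH2 : H2 = (a3 * x1 ^ 2 - a1 * x3 ^ 2) / (1 - ε ^ 2 * a3 * a1 * x2 ^ 2))
    (hH3 : H3 = (a1 * x2 ^ 2 - a2 * x1 ^ 2) / (1 - ε ^ 2 * a1 * a2 * x3 ^ 2)) :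
    xt2 * x3 - x2 * xt3 = ε * H1 * (xt1 + x1) ∧
    xt3 * x1 - x3 * xt1 = ε * H2 * (xt2 + x2) ∧
    xt1 * x2 - x1 * xt2 = ε * H3 * (xt3 + x3) := by
  subst hH1 hH2 hH3
  refine ⟨?_, ?_, ?_⟩
  · field_simp
    linear_combination (x3 - ε * x1 * a3 * x2) * h2 + (ε * x1 * a2 * x3 - x2) * h3
  · field_simp
    linear_combination (x1 - ε * x2 * a1 * x3) * h3 + (ε * x2 * a3 * x1 - x3) * h1
  · field_simp
    linear_combination (x2 - ε * x3 * a2 * x1) * h1 + (ε * x3 * a1 * x2 - x1) * h2
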